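/- There exists a constant c = c(n) such that for every smooth regular curve f : [0,1] → ℝⁿ, every smooth normal vector field φ along f, and every ε ∈ (0,1): ‖∇ₛφ‖₂ ≤ c(ε‖φ‖_{2,2} + ε⁻¹‖φ‖₂), where the scale-invariant norms are ‖∇ₛⁱφ‖₂ = L[f]^{i+1/2}(∫_I |∇ₛⁱφ|² ds)^{1/2} and ‖φ‖_{2,2} = ‖φ‖₂ + ‖∇ₛφ‖₂ + ‖∇ₛ²φ‖₂. -/

import Mathlib

open scoped RealInnerProductSpace
open MeasureTheory

noncomputable section

abbrev En (n : ℕ) := EuclideanSpace ℝ (Fin n)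

variable {n : ℕ}

/-- Arc-length derivative along `f`. -/
def aD (f g : ℝ → En n) : ℝ → En n := fun x => ‖deriv f x‖⁻¹ • deriv g x

/-- Iterated arc-length derivative. -/
def aDIter (f : ℝ → En n) : ℕ → (ℝ → En n) → ℝ → En n
  | 0, g => g
  | k + 1, g => aD f (aDIter f k g)

/-- Unit tangent vector. -/
def tang (f : ℝ → En n) : ℝ → En n := aD f f

/-- Curvature vector. -/
def curv (f : ℝ → En n) : ℝ → En n := aD f (tang f)

/-- Normal component of the arc-length derivative of a vector field along `f`. -/
def nS (f g : ℝ → En n) : ℝ → En n :=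
  fun x => aD f g x - ⟪aD f g x, tang f x⟫ • tang f x

/-- Iterated normal arc-length derivative. -/
def nSIter (f : ℝ → En n) : ℕ → (ℝ → En n) → ℝ → En n
  | 0, g => g
  | k + 1, g => nS f (nSIter f k g)

/-- Arc-length derivative of a scalar field along `f`. -/
def aDS (f : ℝ → En n) (g : ℝ → ℝ) : ℝ → ℝ := fun x => ‖deriv f x‖⁻¹ * deriv g x

/-- Length of the curve. -/
def len (f : ℝ → En n) : ℝ := ∫ x in (0:ℝ)..1, ‖deriv f x‖

/-- Willmore–Helfrich energy. -/
def WH (lam : ℝ) (ζ : En n) (f : ℝ → En n) : ℝ :=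
  (∫ x in (0:ℝ)..1, ((1/2) * ‖curv f x‖ ^ 2 - ⟪curv f x, ζ⟫) * ‖deriv f x‖) + lam * len f

/-- Time derivative of a time dependent field. -/
def pT (g : ℝ → ℝ → En n) : ℝ → ℝ → En n := fun t x => deriv (fun s => g s x) t

/-- Normal component (w.r.t. the curve `f t`) of the time derivative. -/
def nT (f g : ℝ → ℝ → En n) : ℝ → ℝ → En n :=
  fun t x => pT g t x - ⟪pT g t x, tang (f t) x⟫ • tang (f t) x

/-- Normal arc-length derivative of a time dependent field. -/
def nSF (f g : ℝ → ℝ → En n) : ℝ → ℝ → En n := fun t => nS (f t) (g t)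

/-- Tangential component of the velocity. -/
def tanComp (f : ℝ → ℝ → En n) : ℝ → ℝ → ℝ := fun t x => ⟪pT f t x, tang (f t) x⟫

/-- Normal velocity. -/
def normVel (f : ℝ → ℝ → En n) : ℝ → ℝ → En n :=
  fun t x => pT f t x - tanComp f t x • tang (f t) x

/-- Scale invariant `Lᵖ` norm of the `i`-th normal derivative of `g` along `f`. -/
def sN (f : ℝ → En n) (p : ℝ) (i : ℕ) (g : ℝ → En n) : ℝ :=
  len f ^ ((i : ℝ) + 1 - 1/p) * (∫ x in (0:ℝ)..1, ‖nSIter f i g x‖ ^ p * ‖deriv f x‖) ^ (1/p)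

/-- Scale invariant Sobolev-type norm. -/
def sNk (f : ℝ → En n) (k : ℕ) (g : ℝ → En n) : ℝ :=
  ∑ i ∈ Finset.range (k + 1), sN f 2 i g

open Set
open scoped ContDiff

/-!
Write `Iₖ = ∫ |∇ₛᵏφ|² ds` and `L` for the length. For normal fields `u`, `v` one has
`∂ₛ⟨u, v⟩ = ⟨∇ₛu, v⟩ + ⟨u, ∇ₛv⟩`, so integrating by parts gives
`I₁ = [⟨φ, ∇ₛφ⟩]₀¹ - ∫ ⟨φ, ∇ₛ²φ⟩ ds`, and the last integral is at most `√(I₀ I₂)` by Cauchy–Schwarz.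
Comparing `|u(e)|²` with its mean over the curve gives the trace bound
`|u(e)|² ≤ I(u) / L + 2 √(I(u) I(∇ₛu))`; applied to `u = φ` and `u = ∇ₛφ` it controls the boundary
terms. Young's inequality with a suitably chosen parameter turns this into
`I₁ ≤ 300 (√(I₀ I₂) + I₀ / L²)`, i.e. `‖∇ₛφ‖₂² ≤ 300 ‖φ‖₂ (‖φ‖₂ + ‖∇ₛ²φ‖₂)` in scale-invariant
norms, and AM–GM gives the `ε`-form.
-/

theorem intervalIntegral_mul_le_sqrt_mul_sqrt {F G : ℝ → ℝ} {a b : ℝ} (hab : a ≤ b)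
    (hF : ContinuousOn F (Icc a b)) (hG : ContinuousOn G (Icc a b)) :
    ∫ x in a..b, F x * G x ≤ √(∫ x in a..b, F x ^ 2) * √(∫ x in a..b, G x ^ 2) := by
  have hFF : IntervalIntegrable (fun x => F x ^ 2) volume a b :=
    (hF.pow 2).intervalIntegrable_of_Icc hab
  have hFG : IntervalIntegrable (fun x => F x * G x) volume a b :=
    (hF.mul hG).intervalIntegrable_of_Icc hab
  have hGG : IntervalIntegrable (fun x => G x ^ 2) volume a b :=
    (hG.pow 2).intervalIntegrable_of_Icc hab
  have hquad : ∀ t : ℝ, 0 ≤ (∫ x in a..b, F x ^ 2) * (t * t) +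
      (2 * ∫ x in a..b, F x * G x) * t + ∫ x in a..b, G x ^ 2 := by
    intro t
    have hexpand : ∫ x in a..b, (t * F x + G x) ^ 2 = (∫ x in a..b, F x ^ 2) * (t * t) +
        (2 * ∫ x in a..b, F x * G x) * t + ∫ x in a..b, G x ^ 2 := by
      simp_rw [show ∀ x, (t * F x + G x) ^ 2 = t * t * F x ^ 2 + 2 * t * (F x * G x) + G x ^ 2
        from fun x => by ring]
      rw [intervalIntegral.integral_add ((hFF.const_mul _).add (hFG.const_mul _)) hGG,
        intervalIntegral.integral_add (hFF.const_mul _) (hFG.const_mul _),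
        intervalIntegral.integral_const_mul, intervalIntegral.integral_const_mul]
      ring
    exact hexpand ▸ intervalIntegral.integral_nonneg hab fun x _ => sq_nonneg _
  have hdiscr := discrim_le_zero hquad
  rw [discrim] at hdiscr
  rw [← Real.sqrt_mul (intervalIntegral.integral_nonneg hab fun x _ => sq_nonneg _)]
  exact (le_abs_self _).trans (Real.abs_le_sqrt (by linarith))

theorem intervalIntegral_abs_inner_mul_le {E : Type*} [NormedAddCommGroup E]
    [InnerProductSpace ℝ E] {u v : ℝ → E} {w : ℝ → ℝ} {a b : ℝ} (hab : a ≤ b)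
    (hu : ContinuousOn u (Icc a b)) (hv : ContinuousOn v (Icc a b))
    (hw : ContinuousOn w (Icc a b)) (hw0 : ∀ x ∈ Icc a b, 0 ≤ w x) :
    ∫ x in a..b, |⟪u x, v x⟫ * w x| ≤
      √(∫ x in a..b, ‖u x‖ ^ 2 * w x) * √(∫ x in a..b, ‖v x‖ ^ 2 * w x) := by
  have hsq : ∀ (g : ℝ → E), ∀ x ∈ uIcc a b, (‖g x‖ * √(w x)) ^ 2 = ‖g x‖ ^ 2 * w x :=
    fun g x hx => by rw [mul_pow, Real.sq_sqrt (hw0 x (uIcc_of_le hab ▸ hx))]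
  rw [← intervalIntegral.integral_congr (hsq u), ← intervalIntegral.integral_congr (hsq v)]
  refine le_trans ?_ (intervalIntegral_mul_le_sqrt_mul_sqrt hab (hu.norm.mul hw.sqrt)
    (hv.norm.mul hw.sqrt))
  refine intervalIntegral.integral_mono_on hab
    (((hu.inner hv).mul hw).abs.intervalIntegrable_of_Icc hab)
    (((hu.norm.mul hw.sqrt).mul (hv.norm.mul hw.sqrt)).intervalIntegrable_of_Icc hab)
    fun x hx => ?_
  rw [abs_mul, abs_of_nonneg (hw0 x hx), mul_mul_mul_comm, Real.mul_self_sqrt (hw0 x hx)]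
  exact mul_le_mul_of_nonneg_right (abs_real_inner_le_norm _ _) (hw0 x hx)

theorem le_add_intervalIntegral_abs_of_hasDerivAt {v m : ℝ → ℝ} {a b x y : ℝ} (hab : a ≤ b)
    (hv : ∀ z ∈ Icc a b, HasDerivAt v (m z) z) (hm : ContinuousOn m (Icc a b))
    (hx : x ∈ Icc a b) (hy : y ∈ Icc a b) :
    v x ≤ v y + ∫ z in a..b, |m z| := by
  have hsub : uIcc y x ⊆ Icc a b := uIcc_subset_Icc hy hx
  have hftc : ∫ z in y..x, m z = v x - v y :=
    intervalIntegral.integral_eq_sub_of_hasDerivAt (fun z hz => hv z (hsub hz))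
      ((hm.mono hsub).intervalIntegrable)
  have hIoc : uIoc y x ⊆ Ioc a b := Ioc_subset_Ioc (le_min hy.1 hx.1) (max_le hy.2 hx.2)
  calc v x = v y + ∫ z in y..x, m z := by rw [hftc]; ring
    _ ≤ v y + ∫ z in uIoc y x, |m z| := by
      gcongr
      simpa only [Real.norm_eq_abs] using
        (le_abs_self _).trans (intervalIntegral.norm_integral_le_integral_norm_uIoc (f := m))
    _ ≤ v y + ∫ z in a..b, |m z| := by
      rw [intervalIntegral.integral_of_le hab]
      exact add_le_add_right (setIntegral_mono_set
        (hm.abs.integrableOn_Icc (μ := volume) |>.mono_set Ioc_subset_Icc_self)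
        (Filter.Eventually.of_forall fun z => abs_nonneg _) hIoc.eventuallyLE) _

theorem mul_intervalIntegral_le_of_hasDerivAt {v m w : ℝ → ℝ} {a b e : ℝ} (hab : a ≤ b)
    (hv : ∀ z ∈ Icc a b, HasDerivAt v (m z) z) (hm : ContinuousOn m (Icc a b))
    (hw : ContinuousOn w (Icc a b)) (hw0 : ∀ x ∈ Icc a b, 0 ≤ w x) (he : e ∈ Icc a b) :
    v e * ∫ x in a..b, w x ≤
      (∫ x in a..b, v x * w x) + (∫ x in a..b, |m x|) * ∫ x in a..b, w x := by
  have hvc : ContinuousOn v (Icc a b) := fun x hx => (hv x hx).continuousAt.continuousWithinAt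
  set M := ∫ x in a..b, |m x|
  rw [← intervalIntegral.integral_const_mul, ← intervalIntegral.integral_const_mul,
    ← intervalIntegral.integral_add (f := fun x => v x * w x)
      ((hvc.mul hw).intervalIntegrable_of_Icc hab) ((hw.const_mul _).intervalIntegrable_of_Icc hab)]
  refine intervalIntegral.integral_mono_on hab ((hw.const_mul _).intervalIntegrable_of_Icc hab)
    (((hvc.mul hw).add (hw.const_mul _)).intervalIntegrable_of_Icc hab) fun x hx => ?_
  rw [← add_mul]
  exact mul_le_mul_of_nonneg_right
    (le_add_intervalIntegral_abs_of_hasDerivAt hab hv hm he hx) (hw0 x hx)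

theorem sq_le_of_interpolation_bounds {A B C l a b : ℝ} (hA : 0 ≤ A) (hC : 0 ≤ C) (hl : 0 < l)
    (hB : B ^ 2 ≤ A * C + 2 * a * b) (ha : a ^ 2 ≤ l * A ^ 2 + 2 * A * B)
    (hb : b ^ 2 ≤ l * B ^ 2 + 2 * B * C) :
    B ^ 2 ≤ 300 * (A * C + l ^ 2 * A ^ 2) := by
  rcases hA.eq_or_lt with rfl | hA
  · obtain rfl : a = 0 :=
      pow_eq_zero_iff two_ne_zero |>.mp (le_antisymm (by simpa using ha) (sq_nonneg a))
    simpa using hB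
  -- Young's inequality `2ab ≤ t a² + b² / t` with `t² = 16 l² + C / A`
  obtain ⟨t, ht, ht2⟩ : ∃ t : ℝ, 0 < t ∧ t ^ 2 = 16 * l ^ 2 + C / A :=
    ⟨√(16 * l ^ 2 + C / A), Real.sqrt_pos.mpr (by positivity), Real.sq_sqrt (by positivity)⟩
  set s := t⁻¹
  have hts : t * s = 1 := mul_inv_cancel₀ ht.ne'
  have hs : 0 < s := inv_pos.mpr ht
  have ht2A : t ^ 2 * A = 16 * l ^ 2 * A + C := by rw [ht2]; field_simp
  have hlt : 4 * l ≤ t := by nlinarith [div_nonneg hC hA.le]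
  have hls : l * s ≤ 1 / 4 := by nlinarith
  have hsC : (s * C) ^ 2 ≤ A * C := by
    have hCt : C * C ≤ C * (t ^ 2 * A) := mul_le_mul_of_nonneg_left (by nlinarith) hC
    calc (s * C) ^ 2 = s ^ 2 * (C * C) := by ring
      _ ≤ s ^ 2 * (C * (t ^ 2 * A)) := by gcongr
      _ = (t * s) ^ 2 * (A * C) := by ring
      _ = A * C := by rw [hts]; ring
  have young : 2 * a * b ≤ t * a ^ 2 + s * b ^ 2 := by
    nlinarith [mul_nonneg hs.le (sq_nonneg (t * a - b))]
  have hlB : s * (l * B ^ 2) ≤ B ^ 2 / 4 := by nlinarith [sq_nonneg B]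
  have hlA : t * (l * A ^ 2) ≤ t ^ 2 * A ^ 2 / 4 := by
    nlinarith [mul_le_mul_of_nonneg_left hlt (mul_nonneg ht.le (sq_nonneg A))]
  have hAB : 2 * t * A * B ≤ B ^ 2 / 4 + 4 * t ^ 2 * A ^ 2 := by
    nlinarith [sq_nonneg (B - 4 * t * A)]
  have hBC : 2 * s * B * C ≤ B ^ 2 / 4 + 4 * (A * C) := by nlinarith [sq_nonneg (B - 4 * s * C)]
  have htA : t ^ 2 * A ^ 2 = 16 * l ^ 2 * A ^ 2 + A * C := by linear_combination A * ht2A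
  nlinarith [mul_le_mul_of_nonneg_left ha ht.le, mul_le_mul_of_nonneg_left hb hs.le,
    mul_nonneg hA.le hC]

section CurveGeometry

variable {f g u v : ℝ → En n} {x : ℝ}

theorem inner_tang_self (hx : deriv f x ≠ 0) : ⟪tang f x, tang f x⟫ = 1 := by
  rw [real_inner_self_eq_norm_sq, tang, aD, norm_smul, norm_inv, norm_norm,
    inv_mul_cancel₀ (norm_ne_zero_iff.mpr hx), one_pow]

theorem inner_nS_tang (hx : deriv f x ≠ 0) : ⟪nS f g x, tang f x⟫ = 0 := by
  rw [nS, inner_sub_left, real_inner_smul_left, inner_tang_self hx, mul_one, sub_self]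

theorem inner_deriv_eq_of_inner_tang (hx : deriv f x ≠ 0) (hv : ⟪v x, tang f x⟫ = 0) :
    ⟪deriv u x, v x⟫ = ⟪nS f u x, v x⟫ * ‖deriv f x‖ := by
  have hdecomp : deriv u x = ‖deriv f x‖ • (nS f u x + ⟪aD f u x, tang f x⟫ • tang f x) := by
    rw [nS, sub_add_cancel, aD, smul_inv_smul₀ (norm_ne_zero_iff.mpr hx)]
  rw [hdecomp, real_inner_smul_left, inner_add_left, real_inner_smul_left,
    real_inner_comm (v x) (tang f x), hv, mul_zero, add_zero, mul_comm]

theorem hasDerivAt_inner_of_inner_tang (hu : DifferentiableAt ℝ u x)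
    (hv : DifferentiableAt ℝ v x) (hx : deriv f x ≠ 0) (hun : ⟪u x, tang f x⟫ = 0)
    (hvn : ⟪v x, tang f x⟫ = 0) :
    HasDerivAt (fun y => ⟪u y, v y⟫) ((⟪nS f u x, v x⟫ + ⟪u x, nS f v x⟫) * ‖deriv f x‖) x := by
  refine (hu.hasDerivAt.inner ℝ hv.hasDerivAt).congr_deriv ?_
  rw [← real_inner_comm (u x) (deriv v x), inner_deriv_eq_of_inner_tang hx hun,
    inner_deriv_eq_of_inner_tang hx hvn, real_inner_comm (nS f v x) (u x)]
  ring

theorem ContDiffOn.nS {U : Set ℝ} (hg : ContDiffOn ℝ ∞ g U) (hU : IsOpen U)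
    (hf : ContDiffOn ℝ ∞ f U) (hreg : ∀ x ∈ U, deriv f x ≠ 0) : ContDiffOn ℝ ∞ (nS f g) U := by
  have haD : ∀ h : ℝ → En n, ContDiffOn ℝ ∞ h U → ContDiffOn ℝ ∞ (aD f h) U := fun h hh =>
    ((hf.deriv_of_isOpen hU le_rfl).norm ℝ hreg).inv (fun x hx => norm_ne_zero_iff.mpr (hreg x hx))
      |>.smul (hh.deriv_of_isOpen hU le_rfl)
  have hτ : ContDiffOn ℝ ∞ (tang f) U := haD f hf
  exact (haD g hg).sub (((haD g hg).inner ℝ hτ).smul hτ)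

theorem ContDiffOn.nSIter {U : Set ℝ} (hg : ContDiffOn ℝ ∞ g U) (hU : IsOpen U)
    (hf : ContDiffOn ℝ ∞ f U) (hreg : ∀ x ∈ U, deriv f x ≠ 0) :
    ∀ k, ContDiffOn ℝ ∞ (nSIter f k g) U
  | 0 => hg
  | k + 1 => (hg.nSIter hU hf hreg k).nS hU hf hreg

end CurveGeometry

def arcL2NormSq (f g : ℝ → En n) : ℝ := ∫ x in (0:ℝ)..1, ‖g x‖ ^ 2 * ‖deriv f x‖

section ArcLengthIntegrals

variable {f : ℝ → En n}

theorem arcL2NormSq_nonneg (f g : ℝ → En n) : 0 ≤ arcL2NormSq f g :=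
  intervalIntegral.integral_nonneg zero_le_one fun _ _ => by positivity

theorem len_nonneg (f : ℝ → En n) : 0 ≤ len f :=
  intervalIntegral.integral_nonneg zero_le_one fun _ _ => norm_nonneg _

theorem len_pos (hf : ContDiff ℝ 1 f) (hreg : ∀ x ∈ Icc (0:ℝ) 1, deriv f x ≠ 0) : 0 < len f :=
  intervalIntegral.integral_pos zero_lt_one (hf.continuous_deriv le_rfl).norm.continuousOn
    (fun _ _ => norm_nonneg _) ⟨0, by simp, norm_pos_iff.mpr (hreg 0 (by simp))⟩

theorem sN_nonneg (f : ℝ → En n) (p : ℝ) (i : ℕ) (g : ℝ → En n) : 0 ≤ sN f p i g :=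
  mul_nonneg (Real.rpow_nonneg (len_nonneg f) _) (Real.rpow_nonneg
    (intervalIntegral.integral_nonneg zero_le_one fun _ _ => by positivity) _)

theorem sN_two (f g : ℝ → En n) (k : ℕ) :
    sN f 2 k g = len f ^ k * √(len f) * √(arcL2NormSq f (nSIter f k g)) := by
  have hexp : (k : ℝ) + 1 - 1 / 2 = k + 1 / 2 := by ring
  have hk : (k : ℝ) + 1 / 2 ≠ 0 := by positivity
  simp only [sN, hexp, Real.rpow_two, Real.rpow_add' (len_nonneg f) hk, Real.rpow_natCast,
    ← Real.sqrt_eq_rpow, arcL2NormSq]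

end ArcLengthIntegrals

section NormalFields

variable {f u v : ℝ → En n}

theorem intervalIntegral_inner_nS_eq (hf : ContDiff ℝ 1 f)
    (hreg : ∀ x ∈ Icc (0:ℝ) 1, deriv f x ≠ 0)
    (hu : ∀ x ∈ Icc (0:ℝ) 1, DifferentiableAt ℝ u x)
    (hv : ∀ x ∈ Icc (0:ℝ) 1, DifferentiableAt ℝ v x)
    (hu' : ContinuousOn (nS f u) (Icc 0 1)) (hv' : ContinuousOn (nS f v) (Icc 0 1))
    (hun : ∀ x ∈ Icc (0:ℝ) 1, ⟪u x, tang f x⟫ = 0) (hvn : ∀ x ∈ Icc (0:ℝ) 1, ⟪v x, tang f x⟫ = 0) :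
    ∫ x in (0:ℝ)..1, ⟪nS f u x, v x⟫ * ‖deriv f x‖ =
      ⟪u 1, v 1⟫ - ⟪u 0, v 0⟫ - ∫ x in (0:ℝ)..1, ⟪u x, nS f v x⟫ * ‖deriv f x‖ := by
  have hw := (hf.continuous_deriv le_rfl).norm.continuousOn (s := Icc 0 1)
  have huc := continuousOn_of_forall_continuousAt fun x hx => (hu x hx).continuousAt
  have hvc := continuousOn_of_forall_continuousAt fun x hx => (hv x hx).continuousAt
  have hint₁ : IntervalIntegrable (fun x => ⟪nS f u x, v x⟫ * ‖deriv f x‖) volume 0 1 :=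
    ((hu'.inner hvc).mul hw).intervalIntegrable_of_Icc zero_le_one
  have hint₂ : IntervalIntegrable (fun x => ⟪u x, nS f v x⟫ * ‖deriv f x‖) volume 0 1 :=
    ((huc.inner hv').mul hw).intervalIntegrable_of_Icc zero_le_one
  have hftc := intervalIntegral.integral_eq_sub_of_hasDerivAt (fun x hx => by
      rw [uIcc_of_le zero_le_one] at hx
      exact hasDerivAt_inner_of_inner_tang (hu x hx) (hv x hx) (hreg x hx) (hun x hx) (hvn x hx))
    (by simpa only [add_mul] using hint₁.add hint₂)
  simp only [add_mul] at hftc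
  rw [intervalIntegral.integral_add hint₁ hint₂] at hftc
  linarith

theorem norm_sq_le_of_inner_tang (hf : ContDiff ℝ 1 f)
    (hreg : ∀ x ∈ Icc (0:ℝ) 1, deriv f x ≠ 0) (hu : ∀ x ∈ Icc (0:ℝ) 1, DifferentiableAt ℝ u x)
    (hu' : ContinuousOn (nS f u) (Icc 0 1)) (hun : ∀ x ∈ Icc (0:ℝ) 1, ⟪u x, tang f x⟫ = 0)
    {e : ℝ} (he : e ∈ Icc (0:ℝ) 1) :
    ‖u e‖ ^ 2 ≤ (len f)⁻¹ * arcL2NormSq f u +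
      2 * (√(arcL2NormSq f u) * √(arcL2NormSq f (nS f u))) := by
  have hw := (hf.continuous_deriv le_rfl).norm.continuousOn (s := Icc 0 1)
  have huc := continuousOn_of_forall_continuousAt fun x hx => (hu x hx).continuousAt
  have hL := len_pos hf hreg
  have htrace := mul_intervalIntegral_le_of_hasDerivAt zero_le_one
    (fun x hx =>
      hasDerivAt_inner_of_inner_tang (hu x hx) (hu x hx) (hreg x hx) (hun x hx) (hun x hx))
    (((hu'.inner huc).add (huc.inner hu')).mul hw) hw (fun _ _ => norm_nonneg _) he
  have hderiv : ∫ x in (0:ℝ)..1, |(⟪nS f u x, u x⟫ + ⟪u x, nS f u x⟫) * ‖deriv f x‖| ≤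
      2 * (√(arcL2NormSq f u) * √(arcL2NormSq f (nS f u))) := by
    simp_rw [real_inner_comm (u _) (nS f u _), ← two_mul, mul_assoc, abs_mul (2:ℝ), abs_two,
      intervalIntegral.integral_const_mul]
    exact mul_le_mul_of_nonneg_left (intervalIntegral_abs_inner_mul_le zero_le_one huc hu' hw
      fun _ _ => norm_nonneg _) zero_le_two
  simp only [real_inner_self_eq_norm_sq] at htrace
  change _ * len f ≤ arcL2NormSq f u + _ * len f at htrace
  refine le_of_mul_le_mul_right ?_ hL
  rw [add_mul, mul_comm (len f)⁻¹, mul_assoc, inv_mul_cancel₀ hL.ne', mul_one]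
  linarith [mul_le_mul_of_nonneg_right hderiv hL.le]

theorem arcL2NormSq_nS_le (hf : ContDiff ℝ 1 f) (hreg : ∀ x ∈ Icc (0:ℝ) 1, deriv f x ≠ 0)
    (hu : ∀ x ∈ Icc (0:ℝ) 1, DifferentiableAt ℝ u x)
    (hu' : ∀ x ∈ Icc (0:ℝ) 1, DifferentiableAt ℝ (nS f u) x)
    (hu'' : ContinuousOn (nS f (nS f u)) (Icc 0 1)) (hun : ∀ x ∈ Icc (0:ℝ) 1, ⟪u x, tang f x⟫ = 0) :
    arcL2NormSq f (nS f u) ≤ ‖u 0‖ * ‖nS f u 0‖ + ‖u 1‖ * ‖nS f u 1‖ +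
      √(arcL2NormSq f u) * √(arcL2NormSq f (nS f (nS f u))) := by
  have hw := (hf.continuous_deriv le_rfl).norm.continuousOn (s := Icc 0 1)
  have huc := continuousOn_of_forall_continuousAt fun x hx => (hu x hx).continuousAt
  have hu'c := continuousOn_of_forall_continuousAt fun x hx => (hu' x hx).continuousAt
  have hibp := intervalIntegral_inner_nS_eq hf hreg hu hu' hu'c hu'' hun
    fun x hx => inner_nS_tang (hreg x hx)
  simp only [real_inner_self_eq_norm_sq] at hibp
  have hrest : |∫ x in (0:ℝ)..1, ⟪u x, nS f (nS f u) x⟫ * ‖deriv f x‖| ≤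
      √(arcL2NormSq f u) * √(arcL2NormSq f (nS f (nS f u))) :=
    (intervalIntegral.abs_integral_le_integral_abs zero_le_one).trans
      (intervalIntegral_abs_inner_mul_le zero_le_one huc hu'' hw fun _ _ => norm_nonneg _)
  change arcL2NormSq f (nS f u) = _ at hibp
  linarith [abs_le.mp hrest, abs_real_inner_le_norm (u 0) (nS f u 0),
    real_inner_le_norm (u 1) (nS f u 1), neg_abs_le ⟪u 0, nS f u 0⟫]

theorem arcL2NormSq_nS_le_interpolation (hf : ContDiff ℝ 1 f)
    (hreg : ∀ x ∈ Icc (0:ℝ) 1, deriv f x ≠ 0) (hu : ∀ x ∈ Icc (0:ℝ) 1, DifferentiableAt ℝ u x)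
    (hu' : ∀ x ∈ Icc (0:ℝ) 1, DifferentiableAt ℝ (nS f u) x)
    (hu'' : ContinuousOn (nS f (nS f u)) (Icc 0 1)) (hun : ∀ x ∈ Icc (0:ℝ) 1, ⟪u x, tang f x⟫ = 0) :
    arcL2NormSq f (nS f u) ≤ 300 * (√(arcL2NormSq f u) * √(arcL2NormSq f (nS f (nS f u))) +
      (len f)⁻¹ ^ 2 * arcL2NormSq f u) := by
  have hu'c := continuousOn_of_forall_continuousAt fun x hx => (hu' x hx).continuousAt
  have htrace₀ := fun e (he : e ∈ Icc (0:ℝ) 1) => norm_sq_le_of_inner_tang hf hreg hu hu'c hun he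
  have htrace₁ := fun e (he : e ∈ Icc (0:ℝ) 1) =>
    norm_sq_le_of_inner_tang hf hreg hu' hu'' (fun x hx => inner_nS_tang (hreg x hx)) he
  have hibp := arcL2NormSq_nS_le hf hreg hu hu' hu'' hun
  have hl : 0 < (len f)⁻¹ := inv_pos.mpr (len_pos hf hreg)
  set I₀ := arcL2NormSq f u
  set I₁ := arcL2NormSq f (nS f u)
  set I₂ := arcL2NormSq f (nS f (nS f u))
  have h₀ : √I₀ ^ 2 = I₀ := Real.sq_sqrt (arcL2NormSq_nonneg _ _)
  have h₁ : √I₁ ^ 2 = I₁ := Real.sq_sqrt (arcL2NormSq_nonneg _ _)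
  set X := (len f)⁻¹ * I₀ + 2 * (√I₀ * √I₁)
  set Y := (len f)⁻¹ * I₁ + 2 * (√I₁ * √I₂)
  have hX : √X ^ 2 = X :=
    Real.sq_sqrt (add_nonneg (mul_nonneg hl.le (arcL2NormSq_nonneg _ _)) (by positivity))
  have hY : √Y ^ 2 = Y :=
    Real.sq_sqrt (add_nonneg (mul_nonneg hl.le (arcL2NormSq_nonneg _ _)) (by positivity))
  have hprod : ∀ e ∈ Icc (0:ℝ) 1, ‖u e‖ * ‖nS f u e‖ ≤ √X * √Y := fun e he =>
    mul_le_mul (Real.le_sqrt_of_sq_le (htrace₀ e he)) (Real.le_sqrt_of_sq_le (htrace₁ e he))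
      (norm_nonneg _) (Real.sqrt_nonneg _)
  have := sq_le_of_interpolation_bounds (B := √I₁) (a := √X) (b := √Y)
    (Real.sqrt_nonneg I₀) (Real.sqrt_nonneg I₂) hl
    (by linarith [hprod 0 (by simp), hprod 1 (by simp)]) (by rw [hX, h₀, mul_assoc])
    (by rw [hY, h₁, mul_assoc])
  rwa [h₀, h₁] at this

end NormalFields

theorem sq_sN_one_le {f φ : ℝ → En n} (hf : ContDiff ℝ ∞ f) (hφ : ContDiff ℝ ∞ φ)
    (hreg : ∀ x ∈ Icc (0:ℝ) 1, deriv f x ≠ 0) (hφn : ∀ x ∈ Icc (0:ℝ) 1, ⟪φ x, tang f x⟫ = 0) :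
    sN f 2 1 φ ^ 2 ≤ 300 * (sN f 2 0 φ * (sN f 2 0 φ + sN f 2 2 φ)) := by
  have hU : IsOpen {x | deriv f x ≠ 0} :=
    isOpen_ne_fun (hf.continuous_deriv (by simp)) continuous_const
  have hsmooth k : ContDiffOn ℝ ∞ (nSIter f k φ) {x | deriv f x ≠ 0} :=
    hφ.contDiffOn.nSIter hU hf.contDiffOn (fun _ hx => hx) k
  have hdiff k : ∀ x ∈ Icc (0:ℝ) 1, DifferentiableAt ℝ (nSIter f k φ) x := fun x hx =>
    ((hsmooth k).differentiableOn (by simp)).differentiableAt (hU.mem_nhds (hreg x hx))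
  have hinterp := arcL2NormSq_nS_le_interpolation (hf.of_le (by simp)) hreg (hdiff 0) (hdiff 1)
    ((hsmooth 2).continuousOn.mono hreg) hφn
  have hL := len_pos (hf.of_le (by simp)) hreg
  simp only [nSIter] at hinterp
  simp only [sN_two, nSIter]
  set L := len f
  set I₀ := arcL2NormSq f φ
  set I₂ := arcL2NormSq f (nS f (nS f φ))
  have hL' : √L * √L = L := Real.mul_self_sqrt hL.le
  have h₀ : √I₀ * √I₀ = I₀ := Real.mul_self_sqrt (arcL2NormSq_nonneg _ _)
  calc (L ^ 1 * √L * √(arcL2NormSq f (nS f φ))) ^ 2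
      = L ^ 3 * arcL2NormSq f (nS f φ) := by
        rw [mul_pow, mul_pow, Real.sq_sqrt hL.le, Real.sq_sqrt (arcL2NormSq_nonneg _ _)]; ring
    _ ≤ L ^ 3 * (300 * (√I₀ * √I₂ + L⁻¹ ^ 2 * I₀)) := by gcongr
    _ = 300 * ((√L * √L) * (√I₀ * √I₀) + L ^ 2 * (√L * √L) * (√I₀ * √I₂)) := by
        rw [hL', h₀]; field_simp; ring
    _ = _ := by ring

theorem le_mul_add_inv_mul_of_sq_le {x y z c ε : ℝ} (hc : 0 ≤ c) (hε : 0 < ε) (hy : 0 ≤ y)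
    (hz : 0 ≤ z) (h : x ^ 2 ≤ 4 * c ^ 2 * (y * z)) : x ≤ c * (ε * y + ε⁻¹ * z) := by
  have hεε : ε * ε⁻¹ = 1 := mul_inv_cancel₀ hε.ne'
  refine le_of_sq_le_sq ?_ (by positivity)
  nlinarith [sq_nonneg (c * (ε * y - ε⁻¹ * z))]

theorem interpolation_first_derivative_general (n : ℕ) :
    ∃ c : ℝ, 0 < c ∧
      ∀ f φ : ℝ → En n, ContDiff ℝ (⊤ : ℕ∞) f → ContDiff ℝ (⊤ : ℕ∞) φ →
        (∀ x ∈ Set.Icc (0:ℝ) 1, deriv f x ≠ 0) →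
        (∀ x ∈ Set.Icc (0:ℝ) 1, ⟪φ x, tang f x⟫ = 0) →
        ∀ ε ∈ Set.Ioo (0:ℝ) 1,
          sN f 2 1 φ ≤ c * (ε * sNk f 2 φ + ε⁻¹ * sN f 2 0 φ) := by
  refine ⟨9, by norm_num, fun f φ hf hφ hreg hφn ε hε => ?_⟩
  have h₀ := sN_nonneg f 2 0 φ
  have h₁ := sN_nonneg f 2 1 φ
  have h₂ := sN_nonneg f 2 2 φ
  have hsNk : sNk f 2 φ = sN f 2 0 φ + sN f 2 1 φ + sN f 2 2 φ := by
    simp [sNk, Finset.sum_range_succ]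
  refine le_mul_add_inv_mul_of_sq_le (by norm_num) hε.1 (by linarith) h₀ ?_
  nlinarith [sq_sN_one_le hf hφ hreg hφn]

/-- Interpolation inequality: `‖∇ₛφ‖₂ ≤ c(ε‖φ‖₂,₂ + ε⁻¹‖φ‖₂)` for normal fields `φ`,
with a constant `c = c(n)`. -/
theorem interpolation_first_derivative (n : ℕ) (hn : 2 ≤ n) :
    ∃ c : ℝ, 0 < c ∧
      ∀ f φ : ℝ → En n, ContDiff ℝ (⊤ : ℕ∞) f → ContDiff ℝ (⊤ : ℕ∞) φ →
        (∀ x ∈ Set.Icc (0:ℝ) 1, deriv f x ≠ 0) →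
        (∀ x ∈ Set.Icc (0:ℝ) 1, ⟪φ x, tang f x⟫ = 0) →
        ∀ ε ∈ Set.Ioo (0:ℝ) 1,
          sN f 2 1 φ ≤ c * (ε * sNk f 2 φ + ε⁻¹ * sN f 2 0 φ) :=
  interpolation_first_derivative_general n

end
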